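/- arXiv:1509.03846 — 2 statements merged into one kernel-verified Lean document; each statement's English description precedes it below -/
import Mathlib

section
/- Let U be the unit equilateral triangle and let |U(α)| denote the length of its projection in direction α. Then ∫₀^π |U(α)| dα = 3. -/
open Real MeasureTheory

noncomputable def proj (α : ℝ) (X : Set (ℝ × ℝ)) : Set ℝ :=
  (fun p : ℝ × ℝ => p.1 * Real.cos α + p.2 * Real.sin α) '' X

noncomputable def U : Set (ℝ × ℝ) :=
  convexHull ℝ {((0:ℝ), (0:ℝ)), (1, 0), (1/2, Real.sqrt 3 / 2)}

lemma convexHull_triple (x y z : ℝ) :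
    convexHull ℝ ({x, y, z} : Set ℝ) =
      Set.Icc (min x (min y z)) (max x (max y z)) := by
  set m := min x (min y z)
  set M := max x (max y z)
  have hmM : m ≤ M := le_trans (min_le_left _ _) (le_max_left _ _)
  apply le_antisymm
  · apply convexHull_min _ (convex_Icc m M)
    intro t ht
    rcases ht with h | h | h <;> subst h <;> constructor
    · exact min_le_left _ _
    · exact le_max_left _ _
    · exact le_trans (min_le_right _ _) (min_le_left _ _)
    · exact le_trans (le_max_left _ _) (le_max_right _ _)
    · exact le_trans (min_le_right _ _) (min_le_right _ _)
    · exact le_trans (le_max_right _ _) (le_max_right _ _)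
  · have hm : m ∈ ({x, y, z} : Set ℝ) := by
      rcases le_total x (min y z) with h | h
      · left; simp [m, min_eq_left h]
      · rcases le_total y z with h' | h'
        · right; left; simp [m, min_eq_right h, min_eq_left h']
        · right; right; simp [m, min_eq_right h, min_eq_right h']
    have hM : M ∈ ({x, y, z} : Set ℝ) := by
      rcases le_total (max y z) x with h | h
      · left; simp [M, max_eq_left h]
      · rcases le_total z y with h' | h'
        · right; left; simp [M, max_eq_right h, max_eq_left h']
        · right; right; simp [M, max_eq_right h, max_eq_right h']
    rw [← segment_eq_Icc hmM]
    exact segment_subset_convexHull hm hM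

lemma maxmin_eq (x y : ℝ) :
    max 0 (max x y) - min 0 (min x y) = (|x| + |y| + |x - y|) / 2 := by
  rcases abs_cases x with ⟨h1, h1'⟩ | ⟨h1, h1'⟩ <;>
    rcases abs_cases y with ⟨h2, h2'⟩ | ⟨h2, h2'⟩ <;>
    rcases abs_cases (x - y) with ⟨h3, h3'⟩ | ⟨h3, h3'⟩ <;>
    rw [h1, h2, h3] <;>
    simp only [max_def, min_def] <;> split_ifs <;> linarith

lemma proj_U (α : ℝ) :
    proj α U = Set.Icc (min 0 (min (Real.cos α) (Real.cos (α - π/3))))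
      (max 0 (max (Real.cos α) (Real.cos (α - π/3)))) := by
  have hlin : IsLinearMap ℝ (fun p : ℝ × ℝ => p.1 * Real.cos α + p.2 * Real.sin α) := by
    constructor
    · intro p q; simp; ring
    · intro c p; simp; ring
  have h1 : proj α U = convexHull ℝ
      ((fun p : ℝ × ℝ => p.1 * Real.cos α + p.2 * Real.sin α) ''
        {((0:ℝ), (0:ℝ)), (1, 0), (1/2, Real.sqrt 3 / 2)}) := by
    rw [proj, U, hlin.image_convexHull]
  have h2 : (fun p : ℝ × ℝ => p.1 * Real.cos α + p.2 * Real.sin α) ''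
      {((0:ℝ), (0:ℝ)), (1, 0), (1/2, Real.sqrt 3 / 2)} =
      ({0, Real.cos α, Real.cos (α - π/3)} : Set ℝ) := by
    rw [Set.image_insert_eq, Set.image_insert_eq, Set.image_singleton]
    have : (2⁻¹ : ℝ) * Real.cos α + Real.sqrt 3 / 2 * Real.sin α = Real.cos (α - π/3) := by
      rw [Real.cos_sub, Real.cos_pi_div_three, Real.sin_pi_div_three]; ring
    simp [this]
  rw [h1, h2, convexHull_triple]

lemma abs_cos_periodic : Function.Periodic (fun x : ℝ => |Real.cos x|) π := by
  intro x
  simp [Real.cos_add_pi, abs_neg]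

lemma integral_abs_cos : ∫ x in (0:ℝ)..π, |Real.cos x| = 2 := by
  have hint : ∀ a b : ℝ, IntervalIntegrable (fun x => |Real.cos x|) volume a b :=
    fun a b => (continuous_cos.abs).intervalIntegrable a b
  have hsplit := intervalIntegral.integral_add_adjacent_intervals
    (hint 0 (π/2)) (hint (π/2) π)
  have h1 : ∫ x in (0:ℝ)..(π/2), |Real.cos x| = 1 := by
    rw [intervalIntegral.integral_congr (g := Real.cos)
      (fun x hx => by
        rw [Set.uIcc_of_le (by positivity)] at hx
        exact abs_of_nonneg (Real.cos_nonneg_of_mem_Icc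
          ⟨by linarith [hx.1, pi_pos], hx.2⟩))]
    simp
  have h2 : ∫ x in (π/2:ℝ)..π, |Real.cos x| = 1 := by
    rw [intervalIntegral.integral_congr (g := fun x => -Real.cos x)
      (fun x hx => by
        rw [Set.uIcc_of_le (by linarith [pi_pos])] at hx
        rw [abs_of_nonpos]
        exact Real.cos_nonpos_of_pi_div_two_le_of_le hx.1 (by linarith [hx.2, pi_pos]))]
    rw [intervalIntegral.integral_neg]
    simp
  linarith [hsplit]

lemma integral_abs_cos_shift (c : ℝ) : ∫ x in (0:ℝ)..π, |Real.cos (x + c)| = 2 := by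
  have := intervalIntegral.integral_comp_add_right (a := (0:ℝ)) (b := π)
    (fun x => |Real.cos x|) c
  rw [this, zero_add]
  have hper := abs_cos_periodic.intervalIntegral_add_eq c 0
  rw [zero_add] at hper
  rw [add_comm π c, hper, integral_abs_cos]

theorem integral_projection_length_eq_three :
    ∫ α in (0:ℝ)..π, (volume (proj α U)).toReal = 3 := by
  have key : ∀ α : ℝ, (volume (proj α U)).toReal =
      (|Real.cos α| + |Real.cos (α + (-(π/3)))| + |Real.cos (α + π/3)|) / 2 := by
    intro α
    rw [proj_U α, Real.volume_Icc, ENNReal.toReal_ofReal (by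
      have : min 0 (min (Real.cos α) (Real.cos (α - π/3))) ≤
          max 0 (max (Real.cos α) (Real.cos (α - π/3))) :=
        le_trans (min_le_left _ _) (le_max_left _ _)
      linarith)]
    rw [maxmin_eq]
    have e1 : α + -(π/3) = α - π/3 := by ring
    have e2 : Real.cos α - Real.cos (α - π/3) = Real.cos (α + π/3) := by
      rw [Real.cos_sub, Real.cos_add, Real.cos_pi_div_three, Real.sin_pi_div_three]
      ring
    rw [e1, e2]
  rw [intervalIntegral.integral_congr (g := fun α =>
    (|Real.cos α| + |Real.cos (α + (-(π/3)))| + |Real.cos (α + π/3)|) / 2)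
    (fun α _ => key α)]
  have hic : ∀ c : ℝ, IntervalIntegrable (fun x => |Real.cos (x + c)|) volume 0 π :=
    fun c => ((continuous_cos.comp (continuous_add_right c)).abs).intervalIntegrable 0 π
  have hic0 : IntervalIntegrable (fun x => |Real.cos x|) volume 0 π :=
    (continuous_cos.abs).intervalIntegrable 0 π
  rw [intervalIntegral.integral_div]
  rw [intervalIntegral.integral_add (hic0.add (hic (-(π/3)))) (hic (π/3))]
  rw [intervalIntegral.integral_add hic0 (hic (-(π/3)))]
  rw [integral_abs_cos, integral_abs_cos_shift, integral_abs_cos_shift]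
  norm_num
end

section
/- Let B be a {π/6, π/2, 5π/6}-restricted set of segments (every segment has direction angle π/6, π/2, or 5π/6) satisfying the projection-cover condition for the unit equilateral triangle U: for every α ∈ [0,π], |U(α)| ≤ |B_{π/6}|·|cos(π/6 − α)| + |B_{π/2}|·|cos(π/2 − α)| + |B_{5π/6}|·|cos(5π/6 − α)|, where |B_φ| is the total length of segments of angle φ. Then |B_{π/6}| + |B_{π/2}| + |B_{5π/6}| ≥ √3. -/
/-! The projections of `U` onto the directions `0`, `π/3` and `2π/3` (the directions of its three
sides) all have length `1`, while the segment directions `π/6`, `π/2`, `5π/6` are each orthogonal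
to one of them and make angle `π/6` with the other two. The cover condition at these three angles
therefore reads `1 ≤ (√3/2)(a + c)`, `1 ≤ (√3/2)(a + b)`, `1 ≤ (√3/2)(b + c)`, and summing gives
`√3 (a + b + c) ≥ 3`. -/

open Real MeasureTheory

lemma proj_convexHull (α : ℝ) (s : Set (ℝ × ℝ)) :
    proj α (convexHull ℝ s) = convexHull ℝ (proj α s) := by
  refine IsLinearMap.image_convexHull ⟨fun x y => ?_, fun t x => ?_⟩ s <;>
    simp only [Prod.fst_add, Prod.snd_add, Prod.smul_fst, Prod.smul_snd, smul_eq_mul] <;> ring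

lemma convexHull_eq_Icc_of_subset {s : Set ℝ} {u v : ℝ} (hs : s ⊆ Set.Icc u v) (hu : u ∈ s)
    (hv : v ∈ s) : convexHull ℝ s = Set.Icc u v :=
  (convexHull_min hs (convex_Icc u v)).antisymm <| by
    rw [← segment_eq_Icc ((hs hu).2)]
    exact segment_subset_convexHull hu hv

lemma proj_U_s9 (α : ℝ) :
    proj α U = convexHull ℝ {0, cos α, cos α / 2 + √3 / 2 * sin α} := by
  rw [U, proj_convexHull, proj]
  simp only [Set.image_insert_eq, Set.image_singleton]
  norm_num [div_eq_inv_mul]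

lemma proj_U_zero : proj 0 U = Set.Icc 0 1 := by
  rw [proj_U_s9, cos_zero, sin_zero]
  exact convexHull_eq_Icc_of_subset (by norm_num [Set.insert_subset_iff]) (by simp) (by simp)

lemma proj_U_pi_div_three : proj (π / 3) U = Set.Icc 0 1 := by
  have h : (1 / 2 : ℝ) / 2 + √3 / 2 * (√3 / 2) = 1 := by
    nlinarith [sq_sqrt (show (0 : ℝ) ≤ 3 by norm_num)]
  rw [proj_U_s9, cos_pi_div_three, sin_pi_div_three, h]
  exact convexHull_eq_Icc_of_subset (by norm_num [Set.insert_subset_iff]) (by simp) (by simp)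

lemma proj_U_two_pi_div_three : proj (2 * π / 3) U = Set.Icc (-(1 / 2)) (1 / 2) := by
  have hcos : cos (2 * π / 3) = -(1 / 2) := by
    rw [show 2 * π / 3 = π - π / 3 by ring, cos_pi_sub, cos_pi_div_three]
  have hsin : sin (2 * π / 3) = √3 / 2 := by
    rw [show 2 * π / 3 = π - π / 3 by ring, sin_pi_sub, sin_pi_div_three]
  have h : -(1 / 2 : ℝ) / 2 + √3 / 2 * (√3 / 2) = 1 / 2 := by
    nlinarith [sq_sqrt (show (0 : ℝ) ≤ 3 by norm_num)]
  rw [proj_U_s9, hcos, hsin, h]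
  exact convexHull_eq_Icc_of_subset (by norm_num [Set.insert_subset_iff]) (by simp) (by simp)

def IsProjectionCover (a b c : ℝ) : Prop :=
  ∀ α ∈ Set.Icc (0:ℝ) π, (volume (proj α U)).toReal ≤
    a * |Real.cos (π/6 - α)| + b * |Real.cos (π/2 - α)| + c * |Real.cos (5*π/6 - α)|

namespace IsProjectionCover

variable {a b c : ℝ} (h : IsProjectionCover a b c)
include h

lemma one_le_at_zero : 1 ≤ √3 / 2 * (a + c) := by
  have h0 := h 0 ⟨le_rfl, pi_pos.le⟩
  simp only [sub_zero] at h0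
  rw [proj_U_zero, Real.volume_Icc, cos_pi_div_two,
    show 5 * π / 6 = π - π / 6 by ring, cos_pi_sub, cos_pi_div_six] at h0
  norm_num [abs_of_pos (show 0 < √3 / 2 by positivity)] at h0
  linarith

lemma one_le_at_pi_div_three : 1 ≤ √3 / 2 * (a + b) := by
  have h1 := h (π / 3) ⟨by positivity, by linarith [pi_pos]⟩
  rw [proj_U_pi_div_three, Real.volume_Icc, show π / 6 - π / 3 = -(π / 6) by ring,
    show π / 2 - π / 3 = π / 6 by ring, show 5 * π / 6 - π / 3 = π / 2 by ring, cos_neg,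
    cos_pi_div_six, cos_pi_div_two] at h1
  norm_num [abs_of_pos (show 0 < √3 / 2 by positivity)] at h1
  linarith

lemma one_le_at_two_pi_div_three : 1 ≤ √3 / 2 * (b + c) := by
  have h2 := h (2 * π / 3) ⟨by positivity, by linarith [pi_pos]⟩
  rw [proj_U_two_pi_div_three, Real.volume_Icc, show π / 6 - 2 * π / 3 = -(π / 2) by ring,
    show π / 2 - 2 * π / 3 = -(π / 6) by ring, show 5 * π / 6 - 2 * π / 3 = π / 6 by ring,
    cos_neg, cos_neg, cos_pi_div_six, cos_pi_div_two] at h2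
  norm_num [abs_of_pos (show 0 < √3 / 2 by positivity)] at h2
  linarith

end IsProjectionCover

theorem restricted_barrier_sqrt_three_general (a b c : ℝ)
    (hcov : ∀ α ∈ Set.Icc (0:ℝ) π,
      (volume (proj α U)).toReal ≤
        a * |Real.cos (π/6 - α)| + b * |Real.cos (π/2 - α)| + c * |Real.cos (5*π/6 - α)|) :
    Real.sqrt 3 ≤ a + b + c := by
  have h0 := IsProjectionCover.one_le_at_zero hcov
  have h1 := IsProjectionCover.one_le_at_pi_div_three hcov
  have h2 := IsProjectionCover.one_le_at_two_pi_div_three hcov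
  have hsum : √3 * √3 ≤ √3 * (a + b + c) := by
    rw [mul_self_sqrt (by norm_num)]
    linarith
  exact le_of_mul_le_mul_left hsum (by positivity)

theorem restricted_barrier_sqrt_three (a b c : ℝ)
    (ha : 0 ≤ a) (hb : 0 ≤ b) (hc : 0 ≤ c)
    (hcov : ∀ α ∈ Set.Icc (0:ℝ) π,
      (volume (proj α U)).toReal ≤
        a * |Real.cos (π/6 - α)| + b * |Real.cos (π/2 - α)| + c * |Real.cos (5*π/6 - α)|) :
    Real.sqrt 3 ≤ a + b + c :=
  restricted_barrier_sqrt_three_general a b c hcov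
end
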